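/- arXiv:1605.09575 — 4 statements merged into one kernel-verified Lean document; each statement's English description precedes it below -/
import Mathlib

section
/- Let λ be a partition of 2n+1 in which every even part has even multiplicity (a type B partition). Then the following are equivalent: (i) the transpose λ^t is again a type B partition, i.e. every even part of λ^t has even multiplicity; (ii) for every even part e of λ, the number of parts of λ strictly greater than e is odd; (iii) writing the parts of λ in weakly decreasing order as r_{2k} ≥ r_{2k−1} ≥ ⋯ ≥ r_0 (the number of parts of a type B partition is automatically odd), the even parts occur precisely in consecutive equal pairs of the form r_{2l−1} = r_{2l−2}. (These equivalent conditions characterize the special nilpotent orbits of SO(2n+1,ℂ).) -/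
/-- `l` is a partition of `N`: a weakly decreasing list of positive integers with sum `N`. -/
def IsPartitionOf (N : ℕ) (l : List ℕ) : Prop :=
  l.Pairwise (· ≥ ·) ∧ (∀ x ∈ l, 0 < x) ∧ l.sum = N

/-- the `j`-th column length `c_j(λ) = #{i : λ_i ≥ j}`. -/
def colLen (l : List ℕ) (j : ℕ) : ℕ := l.countP (fun x => decide (j ≤ x))

/-- the transpose partition, as the list `c_1 ≥ c_2 ≥ ⋯ ≥ c_{λ_1}` of column lengths. -/
def transposeList (l : List ℕ) : List ℕ :=
  (List.range (l.foldr max 0)).map (fun j => colLen l (j + 1))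

/-!
Write `λ₀ ≥ λ₁ ≥ ⋯` for the parts, padded with zeros (`l.getD i 0`). The multiplicity of `v + 1`
in `λᵗ` is `λ_v - λ_{v+1}`, so `λᵗ` is of type B exactly when `λ_{2m+1} ≡ λ_{2m+2} (mod 2)` for
all `m`. Then every prefix of odd length has sum `≡ λ₀`; applied to all the parts, whose number is
odd, this makes `λ₀` odd. If `e` is an even part and `c` parts exceed it, those parts have sum
`≡ c` (their even values come with even multiplicity) and, followed by `λ_c = e`, form a prefix
whose sum would be `≡ λ₀ ≡ 1` if `c` were even. Conversely, if both `#{λᵢ > e}` and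
`#{λᵢ ≥ e}` are odd, the block of parts equal to `e` is a union of pairs of positions
`(2m+1, 2m+2)`, and pairs of equal parts have equal parity. Condition (iii) is this pairing read
from the other end of the list.
-/

namespace List

lemma getD_le_of_forall_le {l : List ℕ} {b : ℕ} (h : ∀ x ∈ l, x ≤ b) (i : ℕ) :
    l.getD i 0 ≤ b := by
  rw [getD_eq_getElem?_getD]
  rcases hi : l[i]? with _ | y
  · simp
  · exact h y (mem_of_getElem? hi)

lemma sum_take_add_one_eq_add_getD (l : List ℕ) (i : ℕ) :
    (l.take (i + 1)).sum = (l.take i).sum + l.getD i 0 := by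
  rw [take_add_one, sum_append, getD_eq_getElem?_getD]
  cases l[i]? <;> simp

lemma sum_mod_two_eq_length_mod_two {l : List ℕ} (h : ∀ e ∈ l, Even e → Even (l.count e)) :
    l.sum % 2 = l.length % 2 := by
  rw [Finset.sum_list_count, ← sum_toFinset_count_eq_length, Finset.sum_nat_mod,
    Finset.sum_nat_mod _ _ (count · l)]
  refine congrArg (· % 2) (Finset.sum_congr rfl fun e he => ?_)
  rw [smul_eq_mul, Nat.mul_mod]
  rcases Nat.even_or_odd e with he' | he'
  · have := h e (mem_toFinset.mp he) he'
    rw [Nat.even_iff] at this he'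
    simp [this, he']
  · rw [Nat.odd_iff] at he'
    simp [he']

lemma countP_range_Ico (a b m : ℕ) :
    (range m).countP (fun j => decide (a ≤ j ∧ j < b)) = min b m - min a m := by
  induction m with
  | zero => simp
  | succ m ih =>
    rw [range_succ, countP_append, ih, countP_singleton]
    split_ifs with h <;> simp only [decide_eq_true_eq] at h <;> omega

end List

lemma lt_colLen_iff {l : List ℕ} (hl : l.Pairwise (· ≥ ·)) {c : ℕ} (hc : 0 < c) (i : ℕ) :
    i < colLen l c ↔ c ≤ l.getD i 0 := by
  induction l generalizing i with
  | nil => simp only [colLen, List.countP_nil, List.getD_nil]; omega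
  | cons x t ih =>
    rw [List.pairwise_cons] at hl
    by_cases hx : c ≤ x
    · cases i with
      | zero => simp [colLen, hx]
      | succ i => simpa [colLen, hx] using ih hl.2 i
    · have hmax : ∀ a ∈ x :: t, a ≤ x := fun a ha => (List.mem_cons.1 ha).elim (· ▸ le_rfl) (hl.1 a)
      have hzero : colLen (x :: t) c = 0 :=
        List.countP_eq_zero.2 fun a ha => by
          have := hmax a ha
          simp only [decide_eq_true_eq]
          omega
      have := List.getD_le_of_forall_le hmax i
      rw [hzero]
      omega

lemma getD_le_getD_of_le {l : List ℕ} (hl : l.Pairwise (· ≥ ·)) {i j : ℕ} (hij : i ≤ j) :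
    l.getD j 0 ≤ l.getD i 0 := by
  rcases Nat.eq_zero_or_pos (l.getD j 0) with h | h
  · omega
  · exact (lt_colLen_iff hl h i).1 (hij.trans_lt ((lt_colLen_iff hl h j).2 le_rfl))

lemma getD_eq_iff_colLen {l : List ℕ} (hl : l.Pairwise (· ≥ ·)) {v : ℕ} (hv : 0 < v) (i : ℕ) :
    l.getD i 0 = v ↔ colLen l (v + 1) ≤ i ∧ i < colLen l v := by
  rw [lt_colLen_iff hl hv, ← not_lt, lt_colLen_iff hl v.succ_pos]
  omega

lemma colLen_eq_colLen_succ_add_count (l : List ℕ) (v : ℕ) :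
    colLen l v = colLen l (v + 1) + l.count v := by
  induction l with
  | nil => rfl
  | cons x t ih =>
    simp only [colLen, List.countP_cons, List.count_cons, beq_iff_eq, decide_eq_true_eq] at *
    split_ifs <;> omega

lemma take_colLen_eq_filter {l : List ℕ} (hl : l.Pairwise (· ≥ ·)) (t : ℕ) :
    l.take (colLen l t) = l.filter (fun x => decide (t ≤ x)) := by
  induction l with
  | nil => rfl
  | cons x s ih =>
    rw [List.pairwise_cons] at hl
    by_cases hx : t ≤ x
    · simp [colLen, hx, ← ih hl.2]
    · have hs : ∀ y ∈ s, ¬ t ≤ y := fun y hy => by have := hl.1 y hy; omega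
      have h1 : colLen s t = 0 := List.countP_eq_zero.2 fun y hy => by simpa using hs y hy
      have h2 : s.filter (fun x => decide (t ≤ x)) = [] :=
        List.filter_eq_nil_iff.2 fun y hy => by simpa using hs y hy
      simp only [colLen] at h1
      simp [colLen, hx, h1, h2]

lemma foldr_max_eq_getD_zero {l : List ℕ} (hl : l.Pairwise (· ≥ ·)) :
    l.foldr max 0 = l.getD 0 0 := by
  cases l with
  | nil => rfl
  | cons x t => exact max_eq_left (List.max_le_of_forall_le t x (List.pairwise_cons.1 hl).1)

lemma colLen_succ_eq_succ_iff {l : List ℕ} (hl : l.Pairwise (· ≥ ·)) (v j : ℕ) :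
    colLen l (j + 1) = v + 1 ↔ l.getD (v + 1) 0 ≤ j ∧ j < l.getD v 0 := by
  have := lt_colLen_iff hl (c := j + 1) (by omega) v
  have := lt_colLen_iff hl (c := j + 1) (by omega) (v + 1)
  omega

lemma count_transposeList {l : List ℕ} (hl : l.Pairwise (· ≥ ·)) (v : ℕ) :
    (transposeList l).count (v + 1) = l.getD v 0 - l.getD (v + 1) 0 := by
  rw [transposeList, foldr_max_eq_getD_zero hl, List.count_eq_countP, List.countP_map,
    List.countP_congr (q := fun j => decide (l.getD (v + 1) 0 ≤ j ∧ j < l.getD v 0))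
      fun j _ => by simpa only [Function.comp_apply, beq_iff_eq, decide_eq_true_eq]
        using colLen_succ_eq_succ_iff hl v j, List.countP_range_Ico]
  have := getD_le_getD_of_le hl (Nat.zero_le v)
  have := getD_le_getD_of_le hl (Nat.le_succ v)
  omega

lemma pos_of_mem_transposeList {l : List ℕ} (hl : l.Pairwise (· ≥ ·)) {v : ℕ}
    (hv : v ∈ transposeList l) : 0 < v := by
  obtain ⟨j, hj, rfl⟩ := List.mem_map.1 hv
  rw [List.mem_range, foldr_max_eq_getD_zero hl] at hj
  exact Nat.zero_lt_of_lt ((lt_colLen_iff hl j.succ_pos 0).2 hj)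

def PairsSameParity (l : List ℕ) : Prop :=
  ∀ m, l.getD (2 * m + 1) 0 % 2 = l.getD (2 * m + 2) 0 % 2

lemma PairsSameParity.sum_take_mod_two {l : List ℕ} (h : PairsSameParity l) (k : ℕ) :
    (l.take (2 * k + 1)).sum % 2 = l.getD 0 0 % 2 := by
  induction k with
  | zero => simp [List.sum_take_add_one_eq_add_getD l 0]
  | succ k ih =>
    rw [show 2 * (k + 1) + 1 = 2 * k + 1 + 1 + 1 by ring, List.sum_take_add_one_eq_add_getD,
      List.sum_take_add_one_eq_add_getD]
    have := h k
    omega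

lemma transposeList_typeB_iff {l : List ℕ} (hl : l.Pairwise (· ≥ ·)) :
    (∀ e ∈ transposeList l, Even e → Even ((transposeList l).count e)) ↔ PairsSameParity l := by
  constructor
  · intro h m
    have hcount := count_transposeList hl (2 * m + 1)
    rw [show 2 * m + 1 + 1 = 2 * m + 2 by omega] at hcount
    have hmono := getD_le_getD_of_le hl (show 2 * m + 1 ≤ 2 * m + 2 by omega)
    rcases Nat.eq_zero_or_pos ((transposeList l).count (2 * m + 2)) with h0 | hpos
    · omega
    · have := h _ (List.count_pos_iff.1 hpos) ⟨m + 1, by ring⟩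
      rw [Nat.even_iff] at this
      omega
  · intro h e he hev
    have hpos := pos_of_mem_transposeList hl he
    rw [Nat.even_iff] at hev ⊢
    obtain ⟨m, rfl⟩ : ∃ m, e = 2 * m + 2 := ⟨e / 2 - 1, by omega⟩
    rw [count_transposeList hl (2 * m + 1), show 2 * m + 1 + 1 = 2 * m + 2 by omega]
    have := h m
    have := getD_le_getD_of_le hl (show 2 * m + 1 ≤ 2 * m + 2 by omega)
    omega

lemma PairsSameParity.getD_zero_mod_two {l : List ℕ} (h : PairsSameParity l)
    (hL : Odd l.length) : l.getD 0 0 % 2 = l.sum % 2 := by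
  obtain ⟨k, hk⟩ := hL
  rw [← h.sum_take_mod_two k, ← hk, List.take_length]

lemma PairsSameParity.odd_countP_gt {l : List ℕ} (h : PairsSameParity l)
    (hl : l.Pairwise (· ≥ ·)) (hpos : ∀ x ∈ l, 0 < x)
    (hB : ∀ e ∈ l, Even e → Even (l.count e)) (hhead : Odd (l.getD 0 0)) :
    ∀ e ∈ l, Even e → Odd (l.countP (fun x => decide (e < x))) := by
  intro e he hev
  change Odd (colLen l (e + 1))
  set c := colLen l (e + 1)
  have hce : l.getD c 0 = e := by
    refine (getD_eq_iff_colLen hl (hpos e he) c).2 ⟨le_rfl, ?_⟩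
    rw [colLen_eq_colLen_succ_add_count]
    have := List.count_pos_iff.2 he
    omega
  have hprefix : (l.take c).sum % 2 = c % 2 := by
    rw [take_colLen_eq_filter hl, List.sum_mod_two_eq_length_mod_two,
      ← List.countP_eq_length_filter]
    · rfl
    · intro x hx hxev
      rw [List.count_filter (List.of_mem_filter hx)]
      exact hB x (List.mem_of_mem_filter hx) hxev
  rw [Nat.odd_iff]
  by_contra hc
  have := h.sum_take_mod_two (c / 2)
  rw [show 2 * (c / 2) + 1 = c + 1 by omega, List.sum_take_add_one_eq_add_getD, hce] at this
  rw [Nat.even_iff] at hev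
  rw [Nat.odd_iff] at hhead
  omega

def EvenPartsPaired (l : List ℕ) : Prop :=
  ∀ i < l.length, Even (l.getD i 0) →
    ∃ m, (i = 2 * m + 1 ∨ i = 2 * m + 2) ∧ l.getD (2 * m + 1) 0 = l.getD (2 * m + 2) 0

lemma evenPartsPaired_of_odd_countP_gt {l : List ℕ} (hl : l.Pairwise (· ≥ ·))
    (hpos : ∀ x ∈ l, 0 < x) (hB : ∀ e ∈ l, Even e → Even (l.count e))
    (h : ∀ e ∈ l, Even e → Odd (l.countP (fun x => decide (e < x)))) :
    EvenPartsPaired l := by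
  intro i hi hev
  set v := l.getD i 0
  have hv : v ∈ l := by
    rw [show v = l[i] from List.getD_eq_getElem l 0 hi]
    exact List.getElem_mem hi
  have hvpos := hpos v hv
  obtain ⟨hci, hid⟩ := (getD_eq_iff_colLen hl hvpos i).1 rfl
  have hc : Odd (colLen l (v + 1)) := h v hv hev
  have hd : Odd (colLen l v) := by
    rw [colLen_eq_colLen_succ_add_count]
    exact hc.add_even (hB v hv hev)
  rw [Nat.odd_iff] at hc hd
  refine ⟨(i - 1) / 2, by omega, ?_⟩
  rw [(getD_eq_iff_colLen hl hvpos _).2 ⟨by omega, by omega⟩,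
    (getD_eq_iff_colLen hl hvpos _).2 ⟨by omega, by omega⟩]

lemma EvenPartsPaired.pairsSameParity {l : List ℕ} (h : EvenPartsPaired l)
    (hL : Odd l.length) : PairsSameParity l := by
  intro m
  rw [Nat.odd_iff] at hL
  by_cases hm : 2 * m + 1 < l.length
  · have hpair : ∀ i, (i = 2 * m + 1 ∨ i = 2 * m + 2) → Even (l.getD i 0) →
        l.getD (2 * m + 1) 0 = l.getD (2 * m + 2) 0 := by
      intro i hi hev
      obtain ⟨m', hi', heq⟩ := h i (by omega) hev
      obtain rfl : m' = m := by omega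
      exact heq
    by_cases h1 : Even (l.getD (2 * m + 1) 0)
    · rw [hpair _ (Or.inl rfl) h1]
    by_cases h2 : Even (l.getD (2 * m + 2) 0)
    · rw [hpair _ (Or.inr rfl) h2]
    rw [Nat.not_even_iff_odd, Nat.odd_iff] at h1 h2
    omega
  · rw [List.getD_eq_default _ _ (by omega), List.getD_eq_default _ _ (by omega)]

lemma evenPartsPaired_iff_reverse {l : List ℕ} (hL : Odd l.length) :
    EvenPartsPaired l ↔ ∀ p < l.length, Even (l.reverse.getD p 0) →
      (Odd p → l.reverse.getD (p - 1) 0 = l.reverse.getD p 0) ∧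
      (Even p → p + 1 < l.length ∧ l.reverse.getD (p + 1) 0 = l.reverse.getD p 0) := by
  rw [Nat.odd_iff] at hL
  constructor
  · intro h p hp hev
    rw [List.getD_reverse _ hp] at hev ⊢
    obtain ⟨m, hi, heq⟩ := h _ (by omega) hev
    simp only [Nat.odd_iff, Nat.even_iff]
    constructor
    · intro hp
      rw [List.getD_reverse _ (by omega), show l.length - 1 - (p - 1) = 2 * m + 2 by omega,
        show l.length - 1 - p = 2 * m + 1 by omega, heq]
    · intro hp
      refine ⟨by omega, ?_⟩
      rw [List.getD_reverse _ (by omega), show l.length - 1 - (p + 1) = 2 * m + 1 by omega,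
        show l.length - 1 - p = 2 * m + 2 by omega, heq]
  · intro h i hi hev
    have hrev : l.reverse.getD (l.length - 1 - i) 0 = l.getD i 0 := by
      rw [List.getD_reverse _ (by omega), show l.length - 1 - (l.length - 1 - i) = i by omega]
    obtain ⟨hodd, heven⟩ := h _ (by omega) (hrev ▸ hev)
    simp only [Nat.odd_iff, Nat.even_iff] at hodd heven
    rcases Nat.even_or_odd i with hi' | hi' <;> simp only [Nat.odd_iff, Nat.even_iff] at hi'
    · obtain ⟨hlt, heq⟩ := heven (by omega)
      rw [List.getD_reverse _ hlt, hrev] at heq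
      refine ⟨i / 2 - 1, by omega, ?_⟩
      rw [show 2 * (i / 2 - 1) + 1 = l.length - 1 - (l.length - 1 - i + 1) by omega, heq,
        show 2 * (i / 2 - 1) + 2 = i by omega]
    · have heq := hodd (by omega)
      rw [List.getD_reverse _ (by omega), hrev] at heq
      refine ⟨i / 2, by omega, ?_⟩
      rw [show 2 * (i / 2) + 2 = l.length - 1 - (l.length - 1 - i - 1) by omega, heq,
        show 2 * (i / 2) + 1 = i by omega]

/-- For a type B partition `l` of `2n+1` (every even part has even multiplicity),
the following are equivalent:
(i) the transpose is again of type B;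
(ii) for every even part `e`, the number of parts strictly greater than `e` is odd;
(iii) writing the parts as `r_{2k} ≥ ⋯ ≥ r_0` (positions counted from the end,
so `r_p = l.reverse.getD p 0`), the even parts occur precisely in consecutive equal
pairs `r_{2l-1} = r_{2l-2}` (an even entry at an odd position equals the entry one
position below; an even entry at an even position equals the entry one position above). -/
theorem typeB_special_characterizations (n : ℕ) (l : List ℕ)
    (hpart : IsPartitionOf (2 * n + 1) l)
    (hB : ∀ e ∈ l, Even e → Even (l.count e)) :
    List.TFAE
      [∀ e ∈ transposeList l, Even e → Even ((transposeList l).count e),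
       ∀ e ∈ l, Even e → Odd (l.countP (fun x => decide (e < x))),
       ∀ p < l.length, Even (l.reverse.getD p 0) →
         (Odd p → l.reverse.getD (p - 1) 0 = l.reverse.getD p 0) ∧
         (Even p → p + 1 < l.length ∧ l.reverse.getD (p + 1) 0 = l.reverse.getD p 0)] := by
  obtain ⟨hl, hpos, hsum⟩ := hpart
  have hsum_odd : l.sum % 2 = 1 := by omega
  have hL : Odd l.length := by
    rw [Nat.odd_iff, ← List.sum_mod_two_eq_length_mod_two hB, hsum_odd]
  tfae_have 1 → 2 := fun h =>
    have hpairs := (transposeList_typeB_iff hl).1 h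
    hpairs.odd_countP_gt hl hpos hB (Nat.odd_iff.2 (hpairs.getD_zero_mod_two hL ▸ hsum_odd))
  tfae_have 2 → 3 := fun h =>
    (evenPartsPaired_iff_reverse hL).1 (evenPartsPaired_of_odd_countP_gt hl hpos hB h)
  tfae_have 3 → 1 := fun h =>
    (transposeList_typeB_iff hl).2 (((evenPartsPaired_iff_reverse hL).2 h).pairsSameParity hL)
  tfae_finish
end

section
/- Let λ be a partition of 2n in which every odd part has even multiplicity (a type C partition). Then the following are equivalent: (i) the transpose λ^t is again a type C partition, i.e. every odd part of λ^t has even multiplicity; (ii) for every odd part e of λ, the number of parts of λ strictly greater than e is even; (iii) padding the weakly decreasing list of parts with one zero at the end if necessary so that its length is odd, and writing it as r_{2k+1} ≥ r_{2k} ≥ ⋯ ≥ r_1, the odd parts occur precisely in consecutive equal pairs of the form r_{2l−1} = r_{2l−2}. (These equivalent conditions characterize the special nilpotent orbits of Sp(2n,ℂ).) -/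
/-- pad a list with one zero at the end if necessary so that its length is odd. -/
def padToOdd (c : List ℕ) : List ℕ := if Odd c.length then c else c ++ [0]

/-!
Write `λ_i` for the `i`-th part, counted from `0` and extended by zeros. The multiplicity of `j`
in `λ^t` is `λ_{j-1} - λ_j`, so `λ^t` is of type C iff `λ_{2k}` and `λ_{2k+1}` have the same
parity for every `k`. In a weakly decreasing list the parts equal to `v` fill the index block
`[#{parts > v}, #{parts > v} + mult v)`; for odd `v` the multiplicity is even, so this block is a
union of pairs `{2k, 2k+1}` exactly when `#{parts > v}` is even. That is (ii), and read from the
bottom of the padded list it is (iii). Conversely, same parity in each pair forces (ii) by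
descent: an odd block starting at an odd index is preceded by a larger odd part, whose block of
even length then also starts at a smaller odd index.
-/

def IsTypeC (l : List ℕ) : Prop := ∀ e ∈ l, Odd e → Even (l.count e)

def PairsHaveSameParity (l : List ℕ) : Prop :=
  ∀ k, (Even (l.getD (2 * k) 0) ↔ Even (l.getD (2 * k + 1) 0))

def OddPartsPaired (l : List ℕ) : Prop :=
  ∀ k, (Odd (l.getD (2 * k) 0) ∨ Odd (l.getD (2 * k + 1) 0)) →
    l.getD (2 * k) 0 = l.getD (2 * k + 1) 0

theorem lt_length_of_getD_pos {l : List ℕ} {i : ℕ} (h : 0 < l.getD i 0) : i < l.length := by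
  by_contra hi
  rw [List.getD_eq_default _ _ (not_lt.mp hi)] at h
  exact h.false

theorem getD_mem_of_pos {l : List ℕ} {i : ℕ} (h : 0 < l.getD i 0) : l.getD i 0 ∈ l := by
  rw [List.getD_eq_getElem _ _ (lt_length_of_getD_pos h)]
  exact List.getElem_mem _

theorem getD_le_foldr_max (l : List ℕ) (i : ℕ) : l.getD i 0 ≤ l.foldr max 0 := by
  rcases (l.getD i 0).eq_zero_or_pos with h | h
  · exact h.trans_le (Nat.zero_le _)
  · exact List.le_max_of_le' 0 (getD_mem_of_pos h) le_rfl

theorem countP_lt_eq_countP_succ_lt_add_count (l : List ℕ) (v : ℕ) :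
    l.countP (v < ·) = l.countP (v + 1 < ·) + l.count (v + 1) := by
  induction l with
  | nil => rfl
  | cons a t ih =>
    simp only [List.countP_cons, List.count_cons, ih, beq_iff_eq, decide_eq_true_eq]
    split_ifs <;> omega

theorem countP_range_Ico (M a b : ℕ) :
    (List.range M).countP (fun j => a ≤ j ∧ j < b) = min b M - min a M := by
  induction M with
  | zero => simp
  | succ M ih =>
    rw [List.range_succ, List.countP_append, ih, List.countP_singleton]
    split_ifs with h <;> simp only [decide_eq_true_eq] at h <;> omega

section Sorted

variable {l : List ℕ} (hl : l.Pairwise (· ≥ ·))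
include hl

theorem lt_getD_iff_lt_countP (v i : ℕ) : v < l.getD i 0 ↔ i < l.countP (v < ·) := by
  induction l generalizing i with
  | nil => simp
  | cons a t ih =>
    obtain ⟨ha, ht⟩ := List.pairwise_cons.mp hl
    by_cases hva : v < a
    · cases i with
      | zero => simp [hva]
      | succ i =>
        rw [List.getD_cons_succ, ih ht, List.countP_cons, if_pos (decide_eq_true hva)]
        omega
    · have hnone : t.countP (v < ·) = 0 :=
        List.countP_eq_zero.mpr fun b hb hvb => hva ((of_decide_eq_true hvb).trans_le (ha b hb))
      cases i with
      | zero => simp [hva, hnone]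
      | succ i =>
        rw [List.getD_cons_succ, ih ht, List.countP_cons, if_neg (by simpa using hva), hnone]
        omega

theorem getD_antitone : Antitone (l.getD · 0) := fun i j hij =>
  le_of_forall_lt fun c hc =>
    (lt_getD_iff_lt_countP hl c i).mpr (hij.trans_lt ((lt_getD_iff_lt_countP hl c j).mp hc))

theorem getD_eq_iff_mem_Ico {v : ℕ} (hv : 0 < v) (i : ℕ) :
    l.getD i 0 = v ↔ i ∈ Set.Ico (l.countP (v < ·)) (l.countP (v < ·) + l.count v) := by
  obtain ⟨w, rfl⟩ : ∃ w, v = w + 1 := ⟨v - 1, by omega⟩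
  have h1 := lt_getD_iff_lt_countP hl w i
  have h2 := lt_getD_iff_lt_countP hl (w + 1) i
  rw [countP_lt_eq_countP_succ_lt_add_count l w] at h1
  rw [Set.mem_Ico]
  omega

theorem count_transposeList_s1 {e : ℕ} (he : 0 < e) :
    (transposeList l).count e = l.getD (e - 1) 0 - l.getD e 0 := by
  have hcol : ∀ j, colLen l (j + 1) = e ↔ l.getD e 0 ≤ j ∧ j < l.getD (e - 1) 0 := by
    intro j
    have h1 := lt_getD_iff_lt_countP hl j (e - 1)
    have h2 := lt_getD_iff_lt_countP hl j e
    change l.countP (j < ·) = e ↔ _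
    omega
  rw [transposeList, List.count, List.countP_map,
    List.countP_congr (q := fun j => l.getD e 0 ≤ j ∧ j < l.getD (e - 1) 0) (by simp [hcol]),
    countP_range_Ico, min_eq_left (getD_le_foldr_max l _), min_eq_left (getD_le_foldr_max l _)]

theorem isTypeC_transposeList_iff : IsTypeC (transposeList l) ↔ PairsHaveSameParity l := by
  have hcount : ∀ k, Even ((transposeList l).count (2 * k + 1)) ↔
      (Even (l.getD (2 * k) 0) ↔ Even (l.getD (2 * k + 1) 0)) := fun k => by
    rw [count_transposeList_s1 hl (e := 2 * k + 1) (by omega), Nat.add_sub_cancel,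
      Nat.even_sub (getD_antitone hl (Nat.le_succ _))]
  constructor
  · intro h k
    rw [← hcount]
    by_cases hmem : 2 * k + 1 ∈ transposeList l
    · exact h _ hmem (odd_two_mul_add_one k)
    · rw [List.count_eq_zero_of_not_mem hmem]
      exact Even.zero
  · rintro h e - ⟨k, rfl⟩
    exact (hcount k).mpr (h k)

theorem getD_pair_eq_of_even {v : ℕ} (hv : 0 < v) (hgt : Even (l.countP (v < ·)))
    (hcount : Even (l.count v)) {k : ℕ} (hk : l.getD (2 * k) 0 = v ∨ l.getD (2 * k + 1) 0 = v) :
    l.getD (2 * k) 0 = v ∧ l.getD (2 * k + 1) 0 = v := by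
  simp only [getD_eq_iff_mem_Ico hl hv, Set.mem_Ico] at hk ⊢
  obtain ⟨a, ha⟩ := hgt
  obtain ⟨c, hc⟩ := hcount
  omega

theorem oddPartsPaired_of_even_countP_lt (hC : IsTypeC l)
    (h : ∀ e ∈ l, Odd e → Even (l.countP (e < ·))) : OddPartsPaired l := by
  rintro k (hodd | hodd)
  · have hmem := getD_mem_of_pos hodd.pos
    exact (getD_pair_eq_of_even hl hodd.pos (h _ hmem hodd) (hC _ hmem hodd) (.inl rfl)).2.symm
  · have hmem := getD_mem_of_pos hodd.pos
    exact (getD_pair_eq_of_even hl hodd.pos (h _ hmem hodd) (hC _ hmem hodd) (.inr rfl)).1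

theorem even_countP_lt_of_pairsHaveSameParity (hC : IsTypeC l) (hP : PairsHaveSameParity l) :
    ∀ e ∈ l, Odd e → Even (l.countP (e < ·)) := by
  suffices ∀ a, ∀ v ∈ l, Odd v → l.countP (v < ·) = a → Even a from
    fun v hv hodd => this _ v hv hodd rfl
  intro a
  induction a using Nat.strong_induction_on with
  | _ a ih =>
    rintro v hv hodd rfl
    by_contra ha
    obtain ⟨m, hm⟩ := Nat.not_even_iff_odd.mp ha
    have hcv := List.count_pos_iff.mpr hv
    have hv' : l.getD (2 * m + 1) 0 = v :=
      (getD_eq_iff_mem_Ico hl hodd.pos _).mpr ⟨by omega, by omega⟩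
    have hw : v < l.getD (2 * m) 0 := (lt_getD_iff_lt_countP hl v _).mpr (by omega)
    set w := l.getD (2 * m) 0
    have hwodd : Odd w := by
      rw [← Nat.not_even_iff_odd, hP m, hv', Nat.not_even_iff_odd]
      exact hodd
    have hwmem : w ∈ l := getD_mem_of_pos hwodd.pos
    obtain ⟨hw₁, hw₂⟩ := (getD_eq_iff_mem_Ico hl hwodd.pos (2 * m)).mp rfl
    have hvblock :
        ¬ (l.countP (w < ·) ≤ 2 * m + 1 ∧ 2 * m + 1 < l.countP (w < ·) + l.count w) :=
      fun h => hw.ne ((getD_eq_iff_mem_Ico hl hwodd.pos _).mpr h ▸ hv').symm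
    obtain ⟨c, hc⟩ := hC w hwmem hwodd
    obtain ⟨b, hb⟩ := ih _ (by omega) w hwmem hwodd rfl
    omega

end Sorted

theorem OddPartsPaired.pairsHaveSameParity {l : List ℕ} (h : OddPartsPaired l) :
    PairsHaveSameParity l := by
  intro k
  by_cases hodd : Odd (l.getD (2 * k) 0) ∨ Odd (l.getD (2 * k + 1) 0)
  · rw [h k hodd]
  · simp only [not_or, Nat.not_odd_iff_even] at hodd
    exact iff_of_true hodd.1 hodd.2

theorem getD_padToOdd (l : List ℕ) (i : ℕ) : (padToOdd l).getD i 0 = l.getD i 0 := by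
  unfold padToOdd
  split
  · rfl
  · grind

theorem odd_length_padToOdd (l : List ℕ) : Odd (padToOdd l).length := by
  unfold padToOdd
  split
  · assumption
  · rw [List.length_append, List.length_singleton, Nat.odd_add_one]
    assumption

theorem length_le_length_padToOdd (l : List ℕ) : l.length ≤ (padToOdd l).length := by
  unfold padToOdd
  split <;> simp

theorem getD_reverse_padToOdd (l : List ℕ) {p : ℕ} (hp : p < (padToOdd l).length) :
    (padToOdd l).reverse.getD p 0 = l.getD ((padToOdd l).length - 1 - p) 0 := by
  rw [List.getD_reverse p hp, getD_padToOdd]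

/- In a padded list of length `2m+1`, position `p` counted from the bottom is index `2m+1-p`
counted from the top, so odd positions are even indices and the pair `(r_{2j-1}, r_{2j-2})` is a
pair `(λ_{2k}, λ_{2k+1})`. -/
theorem oddPartsPaired_iff_padToOdd (l : List ℕ) : OddPartsPaired l ↔
    ∀ p, 1 ≤ p → p ≤ (padToOdd l).length →
      Odd ((padToOdd l).reverse.getD (p - 1) 0) →
      (Odd p → 3 ≤ p ∧
        (padToOdd l).reverse.getD (p - 2) 0 = (padToOdd l).reverse.getD (p - 1) 0) ∧
      (Even p → p + 1 ≤ (padToOdd l).length ∧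
        (padToOdd l).reverse.getD p 0 = (padToOdd l).reverse.getD (p - 1) 0) := by
  have hlen := length_le_length_padToOdd l
  obtain ⟨m, hm⟩ := odd_length_padToOdd l
  have hrev : ∀ p < 2 * m + 1, (padToOdd l).reverse.getD p 0 = l.getD (2 * m - p) 0 := by
    intro p hp
    rw [getD_reverse_padToOdd l (hm ▸ hp), hm, Nat.add_sub_cancel]
  rw [hm] at hlen ⊢
  constructor
  · intro h p hp1 hpm hodd
    rw [hrev _ (by omega)] at hodd
    rcases Nat.even_or_odd' p with ⟨j, rfl | rfl⟩
    · rw [show 2 * m - (2 * j - 1) = 2 * (m - j) + 1 by omega] at hodd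
      have hpair := h (m - j) (.inr hodd)
      refine ⟨fun h' => absurd h' (Nat.not_odd_iff_even.mpr (even_two_mul j)),
        fun _ => ⟨by omega, ?_⟩⟩
      rw [hrev _ (by omega), hrev _ (by omega)]
      convert hpair using 2 <;> omega
    · rw [show 2 * m - (2 * j + 1 - 1) = 2 * (m - j) by omega] at hodd
      have hpair := h (m - j) (.inl hodd)
      have hlt := lt_length_of_getD_pos (hpair ▸ hodd.pos)
      refine ⟨fun _ => ⟨by omega, ?_⟩,
        fun h' => absurd h' (Nat.not_even_iff_odd.mpr (odd_two_mul_add_one j))⟩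
      rw [hrev _ (by omega), hrev _ (by omega)]
      convert hpair.symm using 2 <;> omega
  · intro h k hodd
    rcases hodd with hodd | hodd
    · have hlt := lt_length_of_getD_pos hodd.pos
      have hpair := (h (2 * (m - k) + 1) (by omega) (by omega)
        (by rwa [hrev _ (by omega), show 2 * m - (2 * (m - k) + 1 - 1) = 2 * k by omega])).1
        (odd_two_mul_add_one _)
      rw [hrev _ (by omega), hrev _ (by omega)] at hpair
      convert hpair.2.symm using 2 <;> omega
    · have hlt := lt_length_of_getD_pos hodd.pos
      have hpair := (h (2 * (m - k)) (by omega) (by omega)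
        (by rwa [hrev _ (by omega), show 2 * m - (2 * (m - k) - 1) = 2 * k + 1 by omega])).2
        (even_two_mul _)
      rw [hrev _ (by omega), hrev _ (by omega)] at hpair
      convert hpair.2 using 2 <;> omega

/-- For a type C partition `l` of `2n` (every odd part has even multiplicity),
the following are equivalent:
(i) the transpose is again of type C;
(ii) for every odd part `e`, the number of parts strictly greater than `e` is even;
(iii) padding the list of parts with a zero to odd length and writing it as
`r_{2k+1} ≥ r_{2k} ≥ ⋯ ≥ r_1` (so `r_p = (padToOdd l).reverse.getD (p-1) 0`),
the odd parts occur precisely in consecutive equal pairs `r_{2l-1} = r_{2l-2}`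
(an odd entry at an odd position `p` forces `p ≥ 3` and equality with the entry
one position below; an odd entry at an even position equals the entry one position above). -/
theorem typeC_special_characterizations (n : ℕ) (l : List ℕ)
    (hpart : IsPartitionOf (2 * n) l)
    (hC : ∀ e ∈ l, Odd e → Even (l.count e)) :
    List.TFAE
      [∀ e ∈ transposeList l, Odd e → Even ((transposeList l).count e),
       ∀ e ∈ l, Odd e → Even (l.countP (fun x => decide (e < x))),
       ∀ p, 1 ≤ p → p ≤ (padToOdd l).length →
         Odd ((padToOdd l).reverse.getD (p - 1) 0) →
         (Odd p → 3 ≤ p ∧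
            (padToOdd l).reverse.getD (p - 2) 0 = (padToOdd l).reverse.getD (p - 1) 0) ∧
         (Even p → p + 1 ≤ (padToOdd l).length ∧
            (padToOdd l).reverse.getD p 0 = (padToOdd l).reverse.getD (p - 1) 0)] := by
  obtain ⟨hl, -, -⟩ := hpart
  tfae_have 1 → 2 := fun h =>
    even_countP_lt_of_pairsHaveSameParity hl hC ((isTypeC_transposeList_iff hl).mp h)
  tfae_have 2 → 3 := fun h =>
    (oddPartsPaired_iff_padToOdd l).mp (oddPartsPaired_of_even_countP_lt hl hC h)
  tfae_have 3 → 1 := fun h =>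
    (isTypeC_transposeList_iff hl).mpr ((oddPartsPaired_iff_padToOdd l).mpr h).pairsHaveSameParity
  tfae_finish
end

section
/- Let λ be a special type D partition of 2n which has at least one odd part (i.e. λ is not very even). Row procedure: from the list of parts of λ delete all even entries; then repeatedly delete two equal adjacent entries occupying positions 2t and 2t−1 for some t ≥ 1, until no such pair remains; let the number of remaining entries be 2q_r+2. Column procedure: take the padded column list of λ (padded with zeros to even length); repeatedly delete two equal adjacent entries at positions 2t+1 and 2t until no such pair remains; then repeatedly delete two equal adjacent entries of odd value at positions 2t and 2t−1 until no such pair remains; let the number of remaining entries be 2q_c+2. Then both counts are independent of the choices of deletions, and q_r = q_c. (This common value q is the rank of the Lusztig quotient Ā(O) ≅ (ℤ/2ℤ)^q of the corresponding special orbit O of SO(2n,ℂ); the statement is the agreement of the row description and the column description of Ā(O).) -/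
/-- pad a list with one zero at the end if necessary so that its length is even. -/
def padToEven (c : List ℕ) : List ℕ := if Even c.length then c else c ++ [0]

/-- Delete two equal adjacent entries occupying positions `2t+1` and `2t` for some `t ≥ 0`
(positions in a list of length `m` are numbered `m-1, …, 1, 0` from first to last). -/
def delStepE (L L' : List ℕ) : Prop :=
  ∃ (a : ℕ) (l₁ l₂ : List ℕ), Even l₂.length ∧ L = l₁ ++ a :: a :: l₂ ∧ L' = l₁ ++ l₂

/-- Delete two equal adjacent entries occupying positions `2t` and `2t-1` for some `t ≥ 1`. -/
def delStepO (L L' : List ℕ) : Prop :=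
  ∃ (a : ℕ) (l₁ l₂ : List ℕ), Odd l₂.length ∧ L = l₁ ++ a :: a :: l₂ ∧ L' = l₁ ++ l₂

/-- Delete two equal adjacent entries of odd value at positions `2t` and `2t-1`, `t ≥ 1`. -/
def delStepOOddVal (L L' : List ℕ) : Prop :=
  ∃ (a : ℕ) (l₁ l₂ : List ℕ),
    Odd a ∧ Odd l₂.length ∧ L = l₁ ++ a :: a :: l₂ ∧ L' = l₁ ++ l₂

/-!
Deleting an equal adjacent pair that is aligned with the pairing prescribed by a procedure
does not disturb the pairing of the remaining entries, so every maximal sequence of deletions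
ends in the same list: the original list with all equal aligned pairs erased (`erasePairs`).
For a weakly decreasing list the length of that normal form is computed run by run: a run of
`m` equal entries leaves one entry if `m` is odd, and two or none if `m` is even, according to
whether the run starts in the middle of a pair; in the column procedure a surviving pair of odd
value is erased by the second pass.

Write `λ = u₁^n₁ ⋯ u_k^n_k` with `u₁ > ⋯ > u_k > 0` and `Nᵢ = n₁ + ⋯ + nᵢ`. The padded column list
consists of the runs `Nᵢ^(uᵢ - uᵢ₊₁)` (with `u_{k+1} = 0`), plus a single `0` when `u₁` is odd.
The type D condition (`uᵢ` even ⇒ `nᵢ` even) and the special condition (`Nᵢ` odd ⇒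
`uᵢ - uᵢ₊₁` even) make the contribution of `uᵢ` to the row count and that of `Nᵢ` to the column
count differ by `[uᵢ odd, Nᵢ₋₁ even] - [uᵢ₊₁ odd, Nᵢ even]`, which telescopes to the padding zero.
-/

namespace TypeDLusztigQuotient

open List

theorem bodd_eq_decide_odd (n : ℕ) : n.bodd = decide (Odd n) := by
  rw [Bool.eq_iff_iff, decide_eq_true_iff, Nat.odd_iff, Nat.mod_two_of_bodd]
  cases n.bodd <;> simp

theorem bodd_eq_true_iff {n : ℕ} : n.bodd = true ↔ Odd n := by
  rw [bodd_eq_decide_odd, decide_eq_true_iff]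

theorem bodd_eq_false_iff {n : ℕ} : n.bodd = false ↔ Even n := by
  rw [bodd_eq_decide_odd, decide_eq_false_iff_not, Nat.not_odd_iff_even]

theorem bodd_sub {m n : ℕ} (h : n ≤ m) : (m - n).bodd = (m.bodd ^^ n.bodd) := by
  conv_rhs => rw [← Nat.sub_add_cancel h, Nat.bodd_add]
  cases (m - n).bodd <;> cases n.bodd <;> rfl

theorem bodd_length_eq_of_even {l₁ l₂ : List ℕ} {a : ℕ}
    (h : Even (l₁ ++ a :: a :: l₂).length) : l₁.length.bodd = l₂.length.bodd := by
  simp only [length_append, length_cons, ← add_assoc, Nat.even_add_one, not_not,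
    Nat.even_add] at h
  rw [bodd_eq_decide_odd, bodd_eq_decide_odd, decide_eq_decide]
  simp only [← Nat.not_even_iff_odd, h]

section PairErasure

variable (p : ℕ → Bool)

/-- The entries are grouped into consecutive pairs, the first entry being the second member of
a pair when `s = true`; every pair `a, a` with `p a` is deleted. -/
def erasePairs : Bool → List ℕ → List ℕ
  | false, a :: b :: t => if a = b ∧ p a then erasePairs false t else a :: b :: erasePairs false t
  | true, a :: t => a :: erasePairs false t
  | _, l => l

/-- Positions are counted from the end, as in `delStepE`; on lists of even length this agrees
with the pairing of `erasePairs p e` (`bodd_length_eq_of_even`). -/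
def PairDel (e : Bool) (L L' : List ℕ) : Prop :=
  ∃ a l₁ l₂, p a ∧ l₂.length.bodd = e ∧ L = l₁ ++ a :: a :: l₂ ∧ L' = l₁ ++ l₂

variable {p}

theorem erasePairs_sublist : ∀ (s : Bool) (L : List ℕ), erasePairs p s L <+ L
  | false, a :: b :: t => by
    unfold erasePairs
    split_ifs
    · exact ((erasePairs_sublist false t).cons b).cons a
    · exact ((erasePairs_sublist false t).cons_cons b).cons_cons a
  | true, a :: t => (erasePairs_sublist false t).cons_cons a
  | false, [] | false, [_] | true, [] => Sublist.refl _

theorem length_erasePairs_mod_two :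
    ∀ (s : Bool) (L : List ℕ), (erasePairs p s L).length % 2 = L.length % 2
  | false, a :: b :: t => by
    have := length_erasePairs_mod_two false t
    unfold erasePairs
    split_ifs <;> simp <;> omega
  | true, a :: t => by
    have := length_erasePairs_mod_two false t
    simp [erasePairs]
    omega
  | false, [] | false, [_] | true, [] => rfl

theorem erasePairs_append : ∀ (s : Bool) (l₁ l₂ : List ℕ), l₁.length.bodd = s →
    erasePairs p s (l₁ ++ l₂) = erasePairs p s l₁ ++ erasePairs p false l₂
  | false, [], _, _ => rfl
  | false, a :: b :: t, l₂, h => by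
    simp only [length_cons, Nat.bodd_succ, Bool.not_not] at h
    simp only [cons_append, erasePairs, erasePairs_append false t l₂ h]
    split_ifs <;> rfl
  | true, a :: t, l₂, h => by
    simp only [length_cons, Nat.bodd_succ, Bool.not_eq_true'] at h
    simp only [cons_append, erasePairs, erasePairs_append false t l₂ h]
  | false, [_], _, h | true, [], _, h => by simp at h

theorem erasePairs_eq_self_of_forall_ne : ∀ (s : Bool) (L : List ℕ),
    (∀ a l₁ l₂, p a → l₁.length.bodd = s → L ≠ l₁ ++ a :: a :: l₂) → erasePairs p s L = L
  | false, a :: b :: t, h => by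
    have hab : ¬ (a = b ∧ p a) := by
      rintro ⟨rfl, ha⟩
      exact h a [] t ha rfl rfl
    rw [erasePairs, if_neg hab, erasePairs_eq_self_of_forall_ne false t fun c l₁ l₂ hc hl ht =>
      h c (a :: b :: l₁) l₂ hc (by simpa using hl) (by simp [ht])]
  | true, a :: t, h => by
    rw [erasePairs, erasePairs_eq_self_of_forall_ne false t fun c l₁ l₂ hc hl ht =>
      h c (a :: l₁) l₂ hc (by simpa using hl) (by simp [ht])]
  | false, [], _ | false, [_], _ | true, [], _ => rfl

theorem PairDel.length_eq {e : Bool} {L L' : List ℕ} (h : PairDel p e L L') :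
    L.length = L'.length + 2 := by
  obtain ⟨a, l₁, l₂, -, -, rfl, rfl⟩ := h
  simp
  omega

theorem PairDel.erasePairs_eq {e : Bool} {L L' : List ℕ} (h : PairDel p e L L')
    (hL : Even L.length) : erasePairs p e L' = erasePairs p e L := by
  obtain ⟨a, l₁, l₂, ha, he, rfl, rfl⟩ := h
  have hl₁ : l₁.length.bodd = e := (bodd_length_eq_of_even hL).trans he
  rw [erasePairs_append _ _ _ hl₁, erasePairs_append _ _ _ hl₁]
  simp [erasePairs, ha]

theorem PairDel.reflTransGen_invariant {e : Bool} {L M : List ℕ}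
    (h : Relation.ReflTransGen (PairDel p e) L M) (hL : Even L.length) :
    Even M.length ∧ erasePairs p e M = erasePairs p e L := by
  induction h with
  | refl => exact ⟨hL, rfl⟩
  | tail _ hstep ih =>
    obtain ⟨hev, heq⟩ := ih
    refine ⟨?_, (hstep.erasePairs_eq hev).trans heq⟩
    rw [hstep.length_eq] at hev
    simpa [Nat.even_add] using hev

theorem PairDel.erasePairs_eq_self {e : Bool} {M : List ℕ} (hM : Even M.length)
    (h : ∀ M', ¬ PairDel p e M M') : erasePairs p e M = M :=
  erasePairs_eq_self_of_forall_ne e M fun a l₁ l₂ ha hl hM' =>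
    h (l₁ ++ l₂) ⟨a, l₁, l₂, ha, (bodd_length_eq_of_even (hM' ▸ hM)).symm.trans hl, hM', rfl⟩

theorem PairDel.eq_erasePairs_of_reflTransGen {e : Bool} {L M : List ℕ}
    (h : Relation.ReflTransGen (PairDel p e) L M) (hL : Even L.length)
    (hM : ∀ M', ¬ PairDel p e M M') : M = erasePairs p e L := by
  obtain ⟨hev, heq⟩ := PairDel.reflTransGen_invariant h hL
  rw [← heq, PairDel.erasePairs_eq_self hev hM]

end PairErasure

theorem delStepE_eq : delStepE = PairDel (fun _ => true) false := by
  ext L L'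
  simp [delStepE, PairDel, bodd_eq_false_iff]

theorem delStepO_eq : delStepO = PairDel (fun _ => true) true := by
  ext L L'
  simp [delStepO, PairDel, bodd_eq_true_iff]

theorem delStepOOddVal_eq : delStepOOddVal = PairDel Nat.bodd true := by
  ext L L'
  simp [delStepOOddVal, PairDel, bodd_eq_true_iff]

def ofRuns (R : List (ℕ × ℕ)) : List ℕ := R.flatMap fun r => replicate r.2 r.1

def IsRuns (R : List (ℕ × ℕ)) : Prop := (R.map Prod.fst).Pairwise (· > ·) ∧ ∀ r ∈ R, 0 < r.2

theorem ofRuns_cons (v m : ℕ) (R : List (ℕ × ℕ)) :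
    ofRuns ((v, m) :: R) = replicate m v ++ ofRuns R := rfl

theorem ofRuns_append (A B : List (ℕ × ℕ)) : ofRuns (A ++ B) = ofRuns A ++ ofRuns B :=
  flatMap_append

theorem mem_ofRuns {x : ℕ} {R : List (ℕ × ℕ)} (hx : x ∈ ofRuns R) : x ∈ R.map Prod.fst := by
  obtain ⟨r, hr, hx⟩ := mem_flatMap.1 hx
  exact mem_map.2 ⟨r, hr, (eq_of_mem_replicate hx).symm⟩

theorem mem_ofRuns_of_mem {r : ℕ × ℕ} {R : List (ℕ × ℕ)} (hr : r ∈ R) (h : 0 < r.2) :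
    r.1 ∈ ofRuns R :=
  mem_flatMap.2 ⟨r, hr, mem_replicate.2 ⟨h.ne', rfl⟩⟩

theorem IsRuns.sublist {R R' : List (ℕ × ℕ)} (hR : IsRuns R) (h : R' <+ R) : IsRuns R' :=
  ⟨hR.1.sublist (h.map _), fun r hr => hR.2 r (h.subset hr)⟩

theorem IsRuns.of_cons {r : ℕ × ℕ} {R : List (ℕ × ℕ)} (hR : IsRuns (r :: R)) : IsRuns R :=
  hR.sublist (sublist_cons_self r R)

theorem ofRuns_filter (f : ℕ → Bool) (R : List (ℕ × ℕ)) :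
    (ofRuns R).filter f = ofRuns (R.filter fun r => f r.1) := by
  induction R with
  | nil => rfl
  | cons r R ih =>
    obtain ⟨v, m⟩ := r
    rw [ofRuns_cons, filter_append, ih, filter_replicate, filter_cons]
    split_ifs <;> rfl

theorem count_ofRuns {r : ℕ × ℕ} {R : List (ℕ × ℕ)} (hR : (R.map Prod.fst).Pairwise (· > ·))
    (hr : r ∈ R) : (ofRuns R).count r.1 = r.2 := by
  induction R with
  | nil => simp at hr
  | cons r' R ih =>
    obtain ⟨v, m⟩ := r'
    rw [map_cons, pairwise_cons] at hR
    rw [ofRuns_cons, count_append, count_replicate]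
    rcases mem_cons.1 hr with rfl | hr
    · rw [count_eq_zero.2 fun h => (hR.1 _ (mem_ofRuns h)).false]
      simp
    · rw [ih hR.2 hr, if_neg (by simpa using (hR.1 _ (mem_map_of_mem hr)).ne'), zero_add]

theorem exists_isRuns_ofRuns_eq {l : List ℕ} (hl : l.Pairwise (· ≥ ·)) :
    ∃ R, IsRuns R ∧ ofRuns R = l := by
  induction l with
  | nil => exact ⟨[], ⟨Pairwise.nil, by simp⟩, rfl⟩
  | cons x t ih =>
    rw [pairwise_cons] at hl
    obtain ⟨R, hR, rfl⟩ := ih hl.2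
    match R, hR, hl with
    | [], _, _ => exact ⟨[(x, 1)], ⟨by simp, by simp⟩, rfl⟩
    | (v, m) :: R, hR, hl =>
      by_cases hvx : v = x
      · subst hvx
        refine ⟨(v, m + 1) :: R, ⟨by simpa using hR.1, ?_⟩, by simp [ofRuns_cons, replicate_succ]⟩
        rintro r (_ | ⟨_, hr⟩)
        · simp
        · exact hR.2 r (mem_cons_of_mem _ hr)
      · have hvx' : v < x := lt_of_le_of_ne
          (hl.1 v (mem_ofRuns_of_mem mem_cons_self (hR.2 _ mem_cons_self))) hvx
        refine ⟨(x, 1) :: (v, m) :: R, ⟨?_, ?_⟩, rfl⟩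
        · rw [map_cons, pairwise_cons]
          refine ⟨fun y hy => ?_, hR.1⟩
          rcases mem_cons.1 hy with rfl | hy
          · exact hvx'
          · exact lt_trans ((pairwise_cons.1 hR.1).1 y hy) hvx'
        · rintro r (_ | ⟨_, hr⟩)
          · simp
          · exact hR.2 r hr

/-- Entries left by `erasePairs (fun _ => true) s` from a run whose multiplicity has parity `mo`,
`s` being the pairing offset at the start of the run. -/
def rowWeight (mo s : Bool) : ℕ := if mo then 1 else if s then 2 else 0

/-- Entries left by `erasePairs Nat.bodd (!s) ∘ erasePairs (fun _ => true) s` from a run of value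
parity `vo` and multiplicity parity `mo`. -/
def colWeight (vo mo s : Bool) : ℕ := if mo then 1 else if s && !vo then 2 else 0

def keptCount (b s : Bool) (m : ℕ) : ℕ := if b ∧ m ≠ 0 then rowWeight m.bodd s else m

theorem keptCount_true_succ (b : Bool) (k : ℕ) :
    keptCount b true (k + 1) = keptCount b false k + 1 := by
  cases b <;> cases h : k.bodd <;> rcases k with _ | k <;>
    simp_all [keptCount, rowWeight, Nat.bodd_succ]

theorem keptCount_false_add_two (b : Bool) (k : ℕ) :
    keptCount b false (k + 2) = (if b then 0 else 2) + keptCount b false k := by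
  cases b <;> rcases k with _ | k <;> simp [keptCount, rowWeight, Nat.bodd_succ, add_comm]

theorem erasePairs_replicate_append {p : ℕ → Bool} {v : ℕ} {t : List ℕ} (ht : ∀ x ∈ t, x ≠ v) :
    ∀ (s : Bool) (m : ℕ), erasePairs p s (replicate m v ++ t) =
      replicate (keptCount (p v) s m) v ++ erasePairs p (s ^^ m.bodd) t
  | _, 0 => by simp [keptCount]
  | true, k + 1 => by
    rw [replicate_succ, cons_append, erasePairs, erasePairs_replicate_append ht false k,
      keptCount_true_succ, replicate_succ, cons_append]
    simp [Nat.bodd_succ]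
  | false, 1 => by
    match t, ht with
    | [], _ => simp [erasePairs, keptCount, rowWeight]
    | w :: t, ht =>
      have hwv : ¬ (v = w ∧ p v) := fun h => ht w mem_cons_self h.1.symm
      simp [erasePairs, hwv, keptCount, rowWeight]
  | false, k + 2 => by
    rw [replicate_succ, replicate_succ, cons_append, cons_append, erasePairs,
      erasePairs_replicate_append ht false k, keptCount_false_add_two]
    cases p v <;> simp [replicate_add, Nat.bodd_succ]

/-- `s` is the pairing offset, as in `erasePairs`, at which each run starts. -/
def runSum (w : Bool → Bool → Bool → ℕ) : Bool → List (ℕ × ℕ) → ℕ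
  | _, [] => 0
  | s, (v, m) :: R => w v.bodd m.bodd s + runSum w (s ^^ m.bodd) R

theorem runSum_append (w : Bool → Bool → Bool → ℕ) (s : Bool) (A B : List (ℕ × ℕ)) :
    runSum w s (A ++ B) = runSum w s A + runSum w (s ^^ (ofRuns A).length.bodd) B := by
  induction A generalizing s with
  | nil => simp [runSum, ofRuns]
  | cons r A ih =>
    obtain ⟨v, m⟩ := r
    simp only [cons_append, runSum, ih, ofRuns_cons, length_append, length_replicate,
      Nat.bodd_add, Bool.xor_assoc, add_assoc]

theorem length_erasePairs_ofRuns {R : List (ℕ × ℕ)} (hR : IsRuns R) (s : Bool) :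
    (erasePairs (fun _ => true) s (ofRuns R)).length = runSum (fun _ => rowWeight) s R := by
  induction R generalizing s with
  | nil => cases s <;> rfl
  | cons r R ih =>
    obtain ⟨v, m⟩ := r
    have ht : ∀ x ∈ ofRuns R, x ≠ v := fun x hx => ((pairwise_cons.1 hR.1).1 x (mem_ofRuns hx)).ne
    rw [ofRuns_cons, erasePairs_replicate_append ht, length_append, length_replicate,
      ih hR.of_cons, runSum, keptCount, if_pos ⟨rfl, (hR.2 _ mem_cons_self).ne'⟩]

theorem length_erasePairs_erasePairs_ofRuns {R : List (ℕ × ℕ)} (hR : IsRuns R) (s : Bool) :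
    (erasePairs Nat.bodd (!s) (erasePairs (fun _ => true) s (ofRuns R))).length =
      runSum colWeight s R := by
  induction R generalizing s with
  | nil => cases s <;> rfl
  | cons r R ih =>
    obtain ⟨v, m⟩ := r
    have ht : ∀ x ∈ ofRuns R, x ≠ v := fun x hx => ((pairwise_cons.1 hR.1).1 x (mem_ofRuns hx)).ne
    have hk : keptCount true s m = rowWeight m.bodd s := by
      simp [keptCount, (hR.2 _ mem_cons_self).ne']
    have hpar : (!s ^^ (rowWeight m.bodd s).bodd) = !(s ^^ m.bodd) := by
      cases s <;> cases m.bodd <;> rfl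
    rw [ofRuns_cons, erasePairs_replicate_append ht, hk,
      erasePairs_replicate_append fun x hx => ht x ((erasePairs_sublist _ _).subset hx), hpar,
      length_append, length_replicate, ih hR.of_cons, runSum]
    congr 1
    cases v.bodd <;> cases m.bodd <;> cases s <;> rfl

theorem foldr_max_replicate_append {n u : ℕ} {t : List ℕ} (hn : 0 < n) (ht : ∀ x ∈ t, x ≤ u) :
    (replicate n u ++ t).foldr max 0 = u := by
  refine le_antisymm (max_le_of_forall_le _ _ fun x hx => ?_)
    (le_max_of_le (mem_append_left t (mem_replicate.2 ⟨hn.ne', rfl⟩)) le_rfl)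
  rcases mem_append.1 hx with hx | hx
  · exact (eq_of_mem_replicate hx).le
  · exact ht x hx

theorem transposeList_replicate_append {n u : ℕ} {t : List ℕ} (hn : 0 < n)
    (ht : ∀ x ∈ t, x ≤ u) :
    transposeList (replicate n u ++ t) =
      (transposeList t).map (· + n) ++ replicate (u - t.foldr max 0) n := by
  have hM : t.foldr max 0 ≤ u := max_le_of_forall_le _ _ ht
  rw [transposeList, foldr_max_replicate_append hn ht]
  obtain ⟨d, rfl⟩ := Nat.exists_eq_add_of_le hM
  rw [range_add, map_append, map_map, Nat.add_sub_cancel_left]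
  congr 1
  · rw [transposeList, map_map]
    refine map_congr_left fun j hj => ?_
    have := mem_range.1 hj
    simp only [colLen, countP_append, countP_replicate, decide_eq_true_eq]
    rw [if_pos (by omega), add_comm]
    rfl
  · rw [show replicate d n = (range d).map fun _ => n by simp]
    refine map_congr_left fun i hi => ?_
    have := mem_range.1 hi
    have h0 : colLen t (t.foldr max 0 + i + 1) = 0 := by
      refine countP_eq_zero.2 fun x hx => ?_
      have : x ≤ t.foldr max 0 := le_max_of_le hx le_rfl
      simp only [decide_eq_true_eq, not_le]
      omega
    simp only [Function.comp_apply, colLen, countP_append, countP_replicate] at h0 ⊢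
    rw [h0, if_pos (by simp; omega), add_zero]

/-- The runs of the column lengths of `ofRuns R`, each increased by `N`
(see `ofRuns_colRunsFrom`). -/
def colRunsFrom : ℕ → List (ℕ × ℕ) → List (ℕ × ℕ)
  | _, [] => []
  | N, (u, n) :: R => colRunsFrom (N + n) R ++ [(N + n, u - (ofRuns R).foldr max 0)]

theorem foldr_max_ofRuns_lt {u n : ℕ} {R : List (ℕ × ℕ)} (hR : IsRuns ((u, n) :: R))
    (hu : 0 < u) : (ofRuns R).foldr max 0 < u := by
  have : (ofRuns R).foldr max 0 ≤ u - 1 := max_le_of_forall_le _ _ fun x hx => by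
    have := (pairwise_cons.1 hR.1).1 x (mem_ofRuns hx)
    omega
  omega

theorem ofRuns_colRunsFrom {R : List (ℕ × ℕ)} (hR : IsRuns R) (N : ℕ) :
    ofRuns (colRunsFrom N R) = (transposeList (ofRuns R)).map (· + N) := by
  induction R generalizing N with
  | nil => rfl
  | cons r R ih =>
    obtain ⟨u, n⟩ := r
    have ht : ∀ x ∈ ofRuns R, x ≤ u := fun x hx => ((pairwise_cons.1 hR.1).1 x (mem_ofRuns hx)).le
    rw [colRunsFrom, ofRuns_append, ih hR.of_cons, ofRuns_cons u n,
      transposeList_replicate_append (hR.2 _ mem_cons_self) ht]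
    simp [ofRuns, map_replicate, add_comm, add_left_comm]

theorem isRuns_colRunsFrom {R : List (ℕ × ℕ)} (hR : IsRuns R) (hpos : ∀ r ∈ R, 0 < r.1)
    (N : ℕ) : IsRuns (colRunsFrom N R) ∧ ∀ r ∈ colRunsFrom N R, N < r.1 := by
  induction R generalizing N with
  | nil => exact ⟨⟨Pairwise.nil, by simp [colRunsFrom]⟩, by simp [colRunsFrom]⟩
  | cons r R ih =>
    obtain ⟨u, n⟩ := r
    have hn := hR.2 _ mem_cons_self
    have hlt := foldr_max_ofRuns_lt hR (hpos _ mem_cons_self)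
    obtain ⟨⟨hdec, hmul⟩, hgt⟩ :=
      ih hR.of_cons (fun r hr => hpos r (mem_cons_of_mem _ hr)) (N + n)
    refine ⟨⟨?_, ?_⟩, ?_⟩
    · rw [colRunsFrom, map_append, pairwise_append]
      refine ⟨hdec, by simp, ?_⟩
      simp only [mem_map, map_cons, map_nil, mem_singleton]
      rintro _ ⟨r, hr, rfl⟩ _ rfl
      exact hgt r hr
    · simp only [colRunsFrom, mem_append, mem_singleton]
      rintro r (hr | rfl)
      · exact hmul r hr
      · simp only
        omega
    · simp only [colRunsFrom, mem_append, mem_singleton]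
      rintro r (hr | rfl)
      · exact lt_of_le_of_lt (Nat.le_add_right N n) (hgt r hr)
      · simp only
        omega

/-- `a, a', n, N` are the parities of `uᵢ, uᵢ₊₁, nᵢ, Nᵢ₋₁` in the notation of the header. -/
theorem rowWeight_add_eq_colWeight_add : ∀ a a' n N : Bool, (a = false → n = false) →
    ((N ^^ n) = true → (a ^^ a') = false) →
    (if a then rowWeight n (!N) else 0) + (if a' && !(N ^^ n) then 1 else 0) =
      (if a && !N then 1 else 0) + colWeight (N ^^ n) (a ^^ a') a' := by
  decide

theorem runSum_rowWeight_filter_odd {R : List (ℕ × ℕ)} (hR : IsRuns R)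
    (hpos : ∀ r ∈ R, 0 < r.1) (hD : ∀ r ∈ R, Even r.1 → Even r.2) (N : ℕ)
    (hS : ∀ r ∈ colRunsFrom N R, Odd r.1 → Even r.2) :
    runSum (fun _ => rowWeight) (!N.bodd) (R.filter fun r => decide (Odd r.1)) =
      (if ((ofRuns R).foldr max 0).bodd && !N.bodd then 1 else 0) +
        runSum colWeight false (colRunsFrom N R) := by
  induction R generalizing N with
  | nil => simp [runSum, colRunsFrom, ofRuns]
  | cons r R ih =>
    obtain ⟨u, n⟩ := r
    have hn := hR.2 _ mem_cons_self
    have hlt := foldr_max_ofRuns_lt hR (hpos _ mem_cons_self)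
    have hmax : (ofRuns ((u, n) :: R)).foldr max 0 = u :=
      foldr_max_replicate_append hn fun x hx => ((pairwise_cons.1 hR.1).1 x (mem_ofRuns hx)).le
    have hlen : (ofRuns (colRunsFrom (N + n) R)).length = (ofRuns R).foldr max 0 := by
      rw [ofRuns_colRunsFrom hR.of_cons, length_map, transposeList, length_map, length_range]
    have hDn : u.bodd = false → n.bodd = false := by
      simpa only [bodd_eq_false_iff] using hD _ mem_cons_self
    have hSn : (N.bodd ^^ n.bodd) = true →
        (u.bodd ^^ ((ofRuns R).foldr max 0).bodd) = false := by
      have := hS _ (mem_append_right _ (mem_singleton_self (N + n, u - (ofRuns R).foldr max 0)))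
      rwa [← Nat.bodd_add, ← bodd_sub hlt.le, bodd_eq_true_iff, bodd_eq_false_iff]
    have hrow : runSum (fun _ => rowWeight) (!N.bodd)
        (((u, n) :: R).filter fun r => decide (Odd r.1)) =
          (if u.bodd then rowWeight n.bodd (!N.bodd) else 0) +
            runSum (fun _ => rowWeight) (!(N + n).bodd) (R.filter fun r => decide (Odd r.1)) := by
      rw [filter_cons, ← bodd_eq_decide_odd, Nat.bodd_add]
      cases hu : u.bodd
      · simp [hDn hu]
      · simp [runSum]
    rw [hrow, ih hR.of_cons (fun r hr => hpos r (mem_cons_of_mem _ hr))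
      (fun r hr => hD r (mem_cons_of_mem _ hr)) (N + n)
      (fun r hr => hS r (mem_append_left _ hr)), colRunsFrom, runSum_append, hlen, hmax]
    simp only [runSum, Nat.bodd_add, bodd_sub hlt.le, Bool.false_xor, add_zero]
    have := rowWeight_add_eq_colWeight_add u.bodd ((ofRuns R).foldr max 0).bodd n.bodd N.bodd
      hDn hSn
    omega

theorem even_length_filter_odd_iff (l : List ℕ) :
    Even (l.filter fun x => decide (Odd x)).length ↔ Even l.sum := by
  induction l with
  | nil => simp
  | cons x t ih =>
    rw [filter_cons, sum_cons, Nat.even_add, ← ih]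
    by_cases hx : Odd x
    · simp [hx, Nat.even_add_one, Nat.not_even_iff_odd.2 hx]
    · simp [hx, Nat.not_odd_iff_even.1 hx]

theorem even_length_padToEven (c : List ℕ) : Even (padToEven c).length := by
  unfold padToEven
  split_ifs with h
  · exact h
  · simpa [Nat.even_add_one] using h

theorem padToEven_ofRuns (S : List (ℕ × ℕ)) :
    padToEven (ofRuns S) = ofRuns (S ++ if (ofRuns S).length.bodd then [(0, 1)] else []) := by
  rw [padToEven, ofRuns_append]
  cases h : (ofRuns S).length.bodd
  · rw [if_pos (bodd_eq_false_iff.1 h)]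
    simp [ofRuns]
  · rw [if_neg (Nat.not_even_iff_odd.2 (bodd_eq_true_iff.1 h))]
    rfl

theorem length_rowNormalForm_eq_length_colNormalForm {l : List ℕ}
    (hsort : l.Pairwise (· ≥ ·)) (hpos : ∀ x ∈ l, 0 < x)
    (hD : ∀ e ∈ l, Even e → Even (l.count e))
    (hS : ∀ e ∈ transposeList l, Odd e → Even ((transposeList l).count e)) :
    (erasePairs (fun _ => true) true (l.filter fun x => decide (Odd x))).length =
      (erasePairs Nat.bodd true
        (erasePairs (fun _ => true) false (padToEven (transposeList l)))).length := by
  obtain ⟨R, hR, rfl⟩ := exists_isRuns_ofRuns_eq hsort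
  have hRpos : ∀ r ∈ R, 0 < r.1 := fun r hr => hpos _ (mem_ofRuns_of_mem hr (hR.2 r hr))
  obtain ⟨hC, hCpos⟩ := isRuns_colRunsFrom hR hRpos 0
  have hT : transposeList (ofRuns R) = ofRuns (colRunsFrom 0 R) := by
    simp [ofRuns_colRunsFrom hR]
  have hlen : (ofRuns (colRunsFrom 0 R)).length = (ofRuns R).foldr max 0 := by
    rw [← hT, transposeList, length_map, length_range]
  have hCpad : IsRuns (colRunsFrom 0 R ++
      if (ofRuns (colRunsFrom 0 R)).length.bodd then [(0, 1)] else []) := by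
    split_ifs
    · refine ⟨?_, fun r hr => ?_⟩
      · rw [map_append, pairwise_append]
        exact ⟨hC.1, by simp, by simpa using hCpos⟩
      · rcases mem_append.1 hr with hr | hr
        · exact hC.2 r hr
        · simp [mem_singleton.1 hr]
    · simpa using hC
  have hrow := runSum_rowWeight_filter_odd hR hRpos
    (fun r hr he => count_ofRuns hR.1 hr ▸ hD _ (mem_ofRuns_of_mem hr (hR.2 r hr)) he) 0
    (fun r hr ho => count_ofRuns hC.1 hr ▸ hT ▸ hS _ (hT ▸ mem_ofRuns_of_mem hr (hC.2 r hr)) ho)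
  have hcol := length_erasePairs_erasePairs_ofRuns hCpad false
  rw [Nat.bodd_zero, Bool.not_false, Bool.and_true] at hrow
  rw [Bool.not_false] at hcol
  rw [ofRuns_filter, length_erasePairs_ofRuns (hR.sublist filter_sublist), hT, padToEven_ofRuns,
    hcol, runSum_append, hrow, hlen]
  cases ((ofRuns R).foldr max 0).bodd <;> simp [runSum, colWeight, add_comm]

end TypeDLusztigQuotient

open TypeDLusztigQuotient

/-- Let `l` be a special type D partition of `2n` with at least one odd part.
Row procedure: delete all even entries from the list of parts, then repeatedly delete two
equal adjacent entries at positions `2t` and `2t-1` (`t ≥ 1`) until no such pair remains;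
the remaining number of entries is `2q+2`.
Column procedure: take the padded column list (padded with zeros to even length);
repeatedly delete two equal adjacent entries at positions `2t+1` and `2t` until no such
pair remains; then repeatedly delete two equal adjacent entries of odd value at positions
`2t` and `2t-1` until no such pair remains; the remaining number of entries is `2q+2`.
Both counts are independent of all choices, with the same `q`. -/
theorem typeD_LusztigQuotient_rows_eq_columns (n : ℕ) (l : List ℕ)
    (hpart : IsPartitionOf (2 * n) l)
    (hD : ∀ e ∈ l, Even e → Even (l.count e))
    (hspecial : ∀ e ∈ transposeList l, Odd e → Even ((transposeList l).count e))
    (hodd : ∃ x ∈ l, Odd x) :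
    ∃ q : ℕ,
      (∀ M : List ℕ,
        Relation.ReflTransGen delStepO (l.filter (fun x => decide (Odd x))) M →
        (∀ M', ¬ delStepO M M') → M.length = 2 * q + 2) ∧
      (∀ M₁ M₂ : List ℕ,
        Relation.ReflTransGen delStepE (padToEven (transposeList l)) M₁ →
        (∀ M', ¬ delStepE M₁ M') →
        Relation.ReflTransGen delStepOOddVal M₁ M₂ →
        (∀ M', ¬ delStepOOddVal M₂ M') → M₂.length = 2 * q + 2) := by
  obtain ⟨hsort, hpos, hsum⟩ := hpart
  set L₀ := l.filter fun x => decide (Odd x)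
  have hrow : Even L₀.length := (even_length_filter_odd_iff l).2 (hsum ▸ even_two_mul n)
  have hcol := even_length_padToEven (transposeList l)
  obtain ⟨q, hq⟩ : ∃ q, (erasePairs (fun _ => true) true L₀).length = 2 * q + 2 := by
    obtain ⟨x, hx, hxodd⟩ := hodd
    obtain ⟨y, t, hyt⟩ : ∃ y t, L₀ = y :: t := List.exists_cons_of_ne_nil (List.ne_nil_of_mem
      (List.mem_filter (p := fun x => decide (Odd x)) |>.2 ⟨hx, by simpa using hxodd⟩))
    have hne : (erasePairs (fun _ => true) true L₀).length ≠ 0 := by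
      rw [hyt]
      simp [erasePairs]
    have hmod := length_erasePairs_mod_two (p := fun _ => true) true L₀
    have := Nat.even_iff.1 hrow
    exact ⟨(erasePairs (fun _ => true) true L₀).length / 2 - 1, by omega⟩
  refine ⟨q, fun M hM hMnf => ?_, fun M₁ M₂ hM₁ hM₁nf hM₂ hM₂nf => ?_⟩
  · rw [delStepO_eq] at hM hMnf
    rw [PairDel.eq_erasePairs_of_reflTransGen hM hrow hMnf, hq]
  · rw [delStepE_eq] at hM₁ hM₁nf
    rw [delStepOOddVal_eq] at hM₂ hM₂nf
    rw [PairDel.eq_erasePairs_of_reflTransGen hM₂ (PairDel.reflTransGen_invariant hM₁ hcol).1 hM₂nf,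
      PairDel.eq_erasePairs_of_reflTransGen hM₁ hcol hM₁nf,
      ← length_rowNormalForm_eq_length_colNormalForm hsort hpos hD hspecial, hq]
end

section
/- Let q ≥ 0, let a_{2q+1} ≥ a_{2q} ≥ ⋯ ≥ a_1 ≥ 1 be odd integers, let I ⊆ {1,…,q} satisfy a_{2i} = a_{2i−1} for every i ∈ I, and let μ_1,…,μ_x and ν_1,…,ν_y be positive integers. Let P be the partition whose multiset of parts is {a_{2q+1}−1} ⊎ {a_{2i}, a_{2i−1} : i ∈ I} ⊎ {a_{2j}+1, a_{2j−1}−1 : j ∈ {1,…,q}∖I} ⊎ {μ_u, μ_u : 1 ≤ u ≤ x} ⊎ {ν_v, ν_v : 1 ≤ v ≤ y}, with zero entries discarded, and write |P| = 2n. Then the multiset of the n largest elements of H(P) equals {a_{2q+1}−2, a_{2q+1}−4, …, 3, 1} ⊎ (⊎_{i∈I} K_{a_{2i}}) ⊎ (⊎_{j∉I} T(a_{2j}, a_{2j−1})) ⊎ (⊎_u K_{μ_u}) ⊎ (⊎_v K_{ν_v}), where for odd integers a ≥ b ≥ 1 we set T(a,b) := {a, a−2, …, b+2, b} ⊎ {b−2,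 b−2, b−4, b−4, …, 3, 3, 1, 1}. (This is the computation at the heart of Theorem C for G = SO(2n+1,ℂ): the Dynkin element h^∨ of the dual orbit O^∨ ⊆ sp(2n,ℂ) attached by Sommers' canonical preimage to (O, C_I) coincides with the maximal term Ψ(O, π) of R(Õ^{C_I}), proving the Achar–Sommers conjecture in type B.) -/
/-- The multiset `K_j`: each of `j-1, j-3, …` down to `2` (if `j` is odd) or `1` (if `j`
is even) with multiplicity 2, together with a single `0` when `j` is odd. -/
def Kmult (j : ℕ) : Multiset ℕ :=
  if Even j then 2 • (((List.range (j / 2)).map (fun i => 2 * i + 1) : List ℕ) : Multiset ℕ)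
  else 2 • (((List.range (j / 2)).map (fun i => 2 * i + 2) : List ℕ) : Multiset ℕ) + {0}

/-- The arithmetic string `{r-1, r-3, …, 3-r, 1-r}` attached to a part `r`. -/
def hString (r : ℕ) : Multiset ℤ :=
  (((List.range r).map (fun t => (r : ℤ) - 1 - 2 * t) : List ℤ) : Multiset ℤ)

/-- `H(P)`: the multiset union over the parts `r` of `P` of the strings `{r-1, …, 1-r}`. -/
def HofP (P : Multiset ℕ) : Multiset ℤ := P.bind hString

/-- The multiset of the `n` largest elements of `M`. -/
def topN (M : Multiset ℤ) (n : ℕ) : Multiset ℤ :=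
  (((M.sort (· ≤ ·)).reverse.take n : List ℤ) : Multiset ℤ)

/-- The multiset `{m-2, m-4, …, 3, 1}` of odd numbers below an odd number `m`. -/
def oddsBelow (m : ℕ) : Multiset ℕ :=
  (((List.range (m / 2)).map (fun i => 2 * i + 1) : List ℕ) : Multiset ℕ)

/-- For odd `a ≥ b ≥ 1`, the multiset
`T(a,b) = {a, a-2, …, b+2, b} ⊎ {b-2, b-2, b-4, b-4, …, 3, 3, 1, 1}`. -/
def Tmult (a b : ℕ) : Multiset ℕ :=
  (((List.range ((a - b) / 2 + 1)).map (fun i => b + 2 * i) : List ℕ) : Multiset ℕ)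
    + 2 • oddsBelow b

/-! Every piece of the partition contributes to `H(P)` a multiset of the form `{±s : s ∈ S₀}`:
a part `a - 1` with `a` odd gives `S₀ = {a-2, …, 3, 1}`, a repeated part `j` gives `S₀ = K_j`,
and a pair of parts `a + 1, b - 1` with `b ≤ a` odd gives `S₀ = T(a, b)`. Hence
`H(P) = {±s : s ∈ S}` with `S` the claimed multiset, so `|S| = |P| / 2`, and since every `+s`
dominates every `-s'`, the `|S|` largest elements of `H(P)` are exactly `S`. -/

def plusMinus (S : Multiset ℕ) : Multiset ℤ :=
  S.map ((↑) : ℕ → ℤ) + S.map (fun s : ℕ => -(s : ℤ))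

@[simp] lemma plusMinus_add (S T : Multiset ℕ) :
    plusMinus (S + T) = plusMinus S + plusMinus T := by
  simp only [plusMinus, Multiset.map_add]; abel

@[simp] lemma plusMinus_singleton (s : ℕ) : plusMinus {s} = {(s : ℤ), -(s : ℤ)} := rfl

lemma plusMinus_bind {ι : Type*} (s : Multiset ι) (g : ι → Multiset ℕ) :
    plusMinus (s.bind g) = s.bind fun i => plusMinus (g i) := by
  simp only [plusMinus, Multiset.map_bind, Multiset.bind_add]

lemma card_plusMinus (S : Multiset ℕ) : Multiset.card (plusMinus S) = 2 * Multiset.card S := by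
  simp only [plusMinus, Multiset.card_add, Multiset.card_map]; ring

lemma hString_eq_map_range (r : ℕ) :
    hString r = (Multiset.range r).map fun t : ℕ => (r : ℤ) - 1 - 2 * t := by
  rw [hString, ← Multiset.coe_range, Multiset.map_coe, bind_pure_comp, List.map_eq_map,
    List.map_map]
  rfl

lemma hString_add_two (r : ℕ) :
    hString (r + 2) = hString r + {(r : ℤ) + 1, -((r : ℤ) + 1)} := by
  have shift : ((Multiset.range r).map fun t : ℕ =>
      ((1 + (r + 1) : ℕ) : ℤ) - 1 - 2 * ((1 + t : ℕ) : ℤ)) =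
      (Multiset.range r).map fun t : ℕ => (r : ℤ) - 1 - 2 * t :=
    Multiset.map_congr rfl fun t _ => by push_cast; ring
  have top : ((1 + (r + 1) : ℕ) : ℤ) - 1 - 2 * ((0 : ℕ) : ℤ) = r + 1 := by push_cast; ring
  have bottom : ((1 + (r + 1) : ℕ) : ℤ) - 1 - 2 * ((1 + r : ℕ) : ℤ) = -(r + 1) := by
    push_cast; ring
  rw [hString_eq_map_range, hString_eq_map_range, show r + 2 = 1 + (r + 1) by omega,
    Multiset.range_add, Multiset.range_succ r, Multiset.range_succ 0, Multiset.range_zero]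
  simp only [Multiset.map_cons, Multiset.map_zero, Multiset.map_add, Multiset.map_map,
    Function.comp_def, shift, top, bottom]
  simp [add_comm, Multiset.cons_swap]

lemma oddsBelow_add (m n : ℕ) :
    oddsBelow (2 * (m + n) + 1) =
      oddsBelow (2 * m + 1) + ((List.range n).map (fun i => 2 * m + 1 + 2 * i) : List ℕ) := by
  rw [oddsBelow, oddsBelow, show (2 * (m + n) + 1) / 2 = m + n by omega,
    show (2 * m + 1) / 2 = m by omega, List.range_add, List.map_append, List.map_map,
    ← Multiset.coe_add]
  congr 3
  funext i
  simp only [Function.comp_apply]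
  ring

lemma hString_two_mul (k : ℕ) : hString (2 * k) = plusMinus (oddsBelow (2 * k + 1)) := by
  induction k with
  | zero => rfl
  | succ k ih =>
    rw [show 2 * (k + 1) = 2 * k + 2 by ring, hString_add_two, ih,
      show 2 * k + 2 + 1 = 2 * (k + 1) + 1 by ring, oddsBelow_add k 1]
    simp

lemma hString_pred_of_odd {a : ℕ} (ha : Odd a) : hString (a - 1) = plusMinus (oddsBelow a) := by
  obtain ⟨k, rfl⟩ := ha
  rw [Nat.add_sub_cancel, hString_two_mul]

lemma hString_two_mul_add_one (k : ℕ) :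
    hString (2 * k + 1) = {0} + plusMinus ((List.range k).map (fun i => 2 * i + 2) : List ℕ) := by
  induction k with
  | zero => rfl
  | succ k ih =>
    rw [show 2 * (k + 1) + 1 = 2 * k + 1 + 2 by ring, hString_add_two, ih, List.range_succ,
      List.map_append, ← Multiset.coe_add]
    simp [add_assoc]

lemma hString_add_self (j : ℕ) : hString j + hString j = plusMinus (Kmult j) := by
  obtain ⟨k, rfl | rfl⟩ := Nat.even_or_odd' j
  · rw [Kmult, if_pos (even_two_mul k), hString_two_mul, oddsBelow,
      show (2 * k + 1) / 2 = 2 * k / 2 by omega, two_nsmul, plusMinus_add]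
  · rw [Kmult, if_neg (Nat.not_even_two_mul_add_one k), hString_two_mul_add_one,
      show (2 * k + 1) / 2 = k by omega, two_nsmul, plusMinus_add, plusMinus_add,
      plusMinus_singleton, Nat.cast_zero, neg_zero, Multiset.insert_eq_cons,
      ← Multiset.singleton_add]
    abel

lemma hString_succ_add_hString_pred {a b : ℕ} (ha : Odd a) (hb : Odd b) (hba : b ≤ a) :
    hString (a + 1) + hString (b - 1) = plusMinus (Tmult a b) := by
  obtain ⟨m, rfl⟩ := hb
  obtain ⟨k, rfl⟩ : ∃ k, a = 2 * m + 1 + 2 * k := by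
    obtain ⟨t, rfl⟩ := ha
    exact ⟨t - m, by omega⟩
  rw [show 2 * m + 1 + 2 * k + 1 = 2 * (m + (k + 1)) by ring, show 2 * m + 1 - 1 = 2 * m by omega,
    hString_two_mul, hString_two_mul, oddsBelow_add, Tmult,
    show (2 * m + 1 + 2 * k - (2 * m + 1)) / 2 + 1 = k + 1 by omega]
  simp only [plusMinus_add, two_nsmul]
  abel

lemma sort_add_of_forall_le {α : Type*} [LinearOrder α] {A B : Multiset α}
    (h : ∀ y ∈ A, ∀ x ∈ B, y ≤ x) :
    (A + B).sort (· ≤ ·) = A.sort (· ≤ ·) ++ B.sort (· ≤ ·) := by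
  refine List.Perm.eq_of_pairwise' (Multiset.pairwise_sort _ _) ?_ ?_
  · exact List.pairwise_append.2 ⟨Multiset.pairwise_sort _ _, Multiset.pairwise_sort _ _,
      fun y hy x hx => h y ((Multiset.mem_sort _).1 hy) x ((Multiset.mem_sort _).1 hx)⟩
  · rw [← Multiset.coe_eq_coe, ← Multiset.coe_add, Multiset.sort_eq, Multiset.sort_eq,
      Multiset.sort_eq]

lemma topN_add_of_forall_le {A B : Multiset ℤ} (h : ∀ y ∈ A, ∀ x ∈ B, y ≤ x) :
    topN (A + B) (Multiset.card B) = B := by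
  rw [topN, sort_add_of_forall_le h, List.reverse_append,
    List.take_left' (by rw [List.length_reverse, Multiset.length_sort]),
    Multiset.coe_reverse, Multiset.sort_eq]

lemma topN_plusMinus (S : Multiset ℕ) :
    topN (plusMinus S) (Multiset.card S) = S.map ((↑) : ℕ → ℤ) := by
  rw [plusMinus, add_comm, ← Multiset.card_map ((↑) : ℕ → ℤ) S]
  refine topN_add_of_forall_le fun y hy x hx => ?_
  obtain ⟨u, -, rfl⟩ := Multiset.mem_map.1 hy
  obtain ⟨v, -, rfl⟩ := Multiset.mem_map.1 hx
  omega

@[simp] lemma HofP_add (P Q : Multiset ℕ) : HofP (P + Q) = HofP P + HofP Q :=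
  Multiset.add_bind _ _ _

lemma HofP_bind {ι : Type*} (s : Multiset ι) (f : ι → Multiset ℕ) :
    HofP (s.bind f) = s.bind fun i => HofP (f i) :=
  Multiset.bind_assoc

lemma HofP_pair (r r' : ℕ) : HofP {r, r'} = hString r + hString r' := by
  simp [HofP, Multiset.insert_eq_cons]

lemma HofP_filter_pos (P : Multiset ℕ) : HofP (P.filter (0 < ·)) = HofP P := by
  rw [HofP, Multiset.bind_filter]
  refine Multiset.bind_congr fun r _ => ?_
  rcases Nat.eq_zero_or_pos r with rfl | hr
  · rfl
  · exact if_pos hr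

lemma card_HofP (P : Multiset ℕ) : Multiset.card (HofP P) = P.sum := by
  simp [HofP, Multiset.card_bind, hString_eq_map_range]

lemma HofP_bind_eq_plusMinus_bind {ι : Type*} {s : Multiset ι} {f g : ι → Multiset ℕ}
    (h : ∀ i ∈ s, HofP (f i) = plusMinus (g i)) : HofP (s.bind f) = plusMinus (s.bind g) := by
  rw [HofP_bind, plusMinus_bind, Multiset.bind_congr h]

lemma HofP_two_nsmul (P : Multiset ℕ) : HofP (2 • P) = plusMinus (P.bind Kmult) := by
  rw [two_nsmul, HofP_add, HofP, ← Multiset.bind_add, plusMinus_bind]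
  exact Multiset.bind_congr fun j _ => hString_add_self j

lemma topN_HofP_of_eq_plusMinus {P S : Multiset ℕ} (h : HofP P = plusMinus S) :
    topN (HofP P) (P.sum / 2) = S.map ((↑) : ℕ → ℤ) := by
  have hcard : P.sum = 2 * Multiset.card S := by rw [← card_HofP, h, card_plusMinus]
  rw [h, hcard, Nat.mul_div_cancel_left _ two_pos, topN_plusMinus]

theorem acharSommers_typeB_general (q : ℕ) (a : ℕ → ℕ) (I : Finset ℕ) (μ ν : List ℕ)
    (ha_odd : ∀ i, 1 ≤ i → i ≤ 2 * q + 1 → Odd (a i))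
    (ha_mono : ∀ i, 1 ≤ i → i < 2 * q + 1 → a i ≤ a (i + 1))
    (hIa : ∀ i ∈ I, a (2 * i) = a (2 * i - 1))
    (P : Multiset ℕ)
    (hP : P = (({a (2 * q + 1) - 1} : Multiset ℕ)
        + I.val.bind (fun i => ({a (2 * i), a (2 * i - 1)} : Multiset ℕ))
        + ((Finset.Icc 1 q) \ I).val.bind
            (fun j => ({a (2 * j) + 1, a (2 * j - 1) - 1} : Multiset ℕ))
        + 2 • (μ : Multiset ℕ) + 2 • (ν : Multiset ℕ)).filter (fun z => 0 < z)) :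
    topN (HofP P) (P.sum / 2)
      = (oddsBelow (a (2 * q + 1))
          + I.val.bind (fun i => Kmult (a (2 * i)))
          + ((Finset.Icc 1 q) \ I).val.bind (fun j => Tmult (a (2 * j)) (a (2 * j - 1)))
          + (μ : Multiset ℕ).bind Kmult
          + (ν : Multiset ℕ).bind Kmult).map (fun z => (z : ℤ)) := by
  have hK : ∀ i ∈ I.val, HofP {a (2 * i), a (2 * i - 1)} = plusMinus (Kmult (a (2 * i))) :=
    fun i hi => by rw [HofP_pair, hIa i hi, hString_add_self]
  have hT : ∀ j ∈ ((Finset.Icc 1 q) \ I).val,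
      HofP {a (2 * j) + 1, a (2 * j - 1) - 1} = plusMinus (Tmult (a (2 * j)) (a (2 * j - 1))) := by
    intro j hj
    obtain ⟨hj1, hjq⟩ := Finset.mem_Icc.1 (Finset.mem_sdiff.1 hj).1
    have hmono := ha_mono (2 * j - 1) (by omega) (by omega)
    rw [Nat.sub_add_cancel (by omega)] at hmono
    rw [HofP_pair, hString_succ_add_hString_pred (ha_odd _ (by omega) (by omega))
      (ha_odd _ (by omega) (by omega)) hmono]
  -- the cast on the right-hand side elaborates as the bind `S >>= pure ∘ (↑)`
  rw [Multiset.map_id', bind_pure_comp]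
  refine topN_HofP_of_eq_plusMinus ?_
  rw [hP, HofP_filter_pos]
  simp only [HofP_add, plusMinus_add, HofP_two_nsmul, HofP_bind_eq_plusMinus_bind hK,
    HofP_bind_eq_plusMinus_bind hT]
  rw [HofP, Multiset.singleton_bind, hString_pred_of_odd (ha_odd _ (by omega) le_rfl)]

/-- Achar–Sommers conjecture, type B computation: for odd `a_{2q+1} ≥ ⋯ ≥ a_1 ≥ 1`,
`I ⊆ {1,…,q}` with `a_{2i} = a_{2i-1}` for `i ∈ I`, and positive integers `μ_u`, `ν_v`,
let `P` be the partition with parts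
`{a_{2q+1}-1} ⊎ {a_{2i}, a_{2i-1} : i ∈ I} ⊎ {a_{2j}+1, a_{2j-1}-1 : j ∉ I} ⊎ {μ_u, μ_u} ⊎ {ν_v, ν_v}`
(zero entries discarded), `|P| = 2n`.  Then the `n` largest elements of `H(P)` form the
multiset `{a_{2q+1}-2, …, 3, 1} ⊎ (⊎_{i∈I} K_{a_{2i}}) ⊎ (⊎_{j∉I} T(a_{2j}, a_{2j-1}))
⊎ (⊎_u K_{μ_u}) ⊎ (⊎_v K_{ν_v})`. -/
theorem acharSommers_typeB (q : ℕ) (a : ℕ → ℕ) (I : Finset ℕ) (μ ν : List ℕ)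
    (ha_odd : ∀ i, 1 ≤ i → i ≤ 2 * q + 1 → Odd (a i))
    (ha_mono : ∀ i, 1 ≤ i → i < 2 * q + 1 → a i ≤ a (i + 1))
    (ha_ge : 1 ≤ a 1)
    (hI : I ⊆ Finset.Icc 1 q)
    (hIa : ∀ i ∈ I, a (2 * i) = a (2 * i - 1))
    (hμ : ∀ m ∈ μ, 0 < m) (hν : ∀ m ∈ ν, 0 < m)
    (P : Multiset ℕ)
    (hP : P = (({a (2 * q + 1) - 1} : Multiset ℕ)
        + I.val.bind (fun i => ({a (2 * i), a (2 * i - 1)} : Multiset ℕ))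
        + ((Finset.Icc 1 q) \ I).val.bind
            (fun j => ({a (2 * j) + 1, a (2 * j - 1) - 1} : Multiset ℕ))
        + 2 • (μ : Multiset ℕ) + 2 • (ν : Multiset ℕ)).filter (fun z => 0 < z)) :
    topN (HofP P) (P.sum / 2)
      = (oddsBelow (a (2 * q + 1))
          + I.val.bind (fun i => Kmult (a (2 * i)))
          + ((Finset.Icc 1 q) \ I).val.bind (fun j => Tmult (a (2 * j)) (a (2 * j - 1)))
          + (μ : Multiset ℕ).bind Kmult
          + (ν : Multiset ℕ).bind Kmult).map (fun z => (z : ℤ)) :=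
  acharSommers_typeB_general q a I μ ν ha_odd ha_mono hIa P hP
end
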